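/- Let x₁, x₂, … be independent real random variables with E x_i = 0 for all i ∈ ℕ, and suppose there exist absolute constants C_x and b_x such that Pr{|x_i| > μ} ≤ C_x exp(−μ/b_x) for all i ∈ ℕ and all μ > 0. Then there exists an absolute constant K_x (depending only on C_x and b_x) such that for every real sequence a = (a_i)_{i∈ℕ} with ‖a‖₁ = Σ_i |a_i| < ∞ and every μ > 0, Pr{Σ_{i∈ℕ} |a_i x_i| > μ} ≤ exp(−(1/‖a‖_∞)(μ/(2K_x e) − ‖a‖₁)), where ‖a‖_∞ = sup_i |a_i|. -/

import Mathlib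

/-!
Chernoff's method. Integrating the tail bound against the layer-cake formula gives
`E exp (s |xᵢ|) ≤ exp (2 C b s)` for `0 ≤ s ≤ 1 / (2b)`. With `t = 1 / (2 b C ‖a‖_∞)` and
`s = t |aᵢ|`, independence bounds the moment generating function at `t` of every partial sum of
`∑ |aᵢ xᵢ|` by `exp (2 C b t ‖a‖₁) = exp (‖a‖₁ / ‖a‖_∞)`, so Markov's inequality controls each
partial sum, and monotone convergence passes to the whole series. This works with
`K = 2 b max 1 C`.
-/

open MeasureTheory ProbabilityTheory Filter Topology

open Real Set Finset

section

variable {Ω : Type*} [MeasurableSpace Ω] {μ : Measure Ω}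

theorem lintegral_exp_mul_sub_one_le_of_tail {f : Ω → ℝ} (hf : Measurable f)
    (hf0 : ∀ ω, 0 ≤ f ω) {C b s : ℝ} (hC : 0 ≤ C) (hs : 0 ≤ s) (hsb : s < 1 / b)
    (htail : ∀ t > 0, μ {ω | t < f ω} ≤ ENNReal.ofReal (C * exp (-t / b))) :
    ∫⁻ ω, ENNReal.ofReal (exp (s * f ω) - 1) ∂μ ≤ ENNReal.ofReal (C * s / (1 / b - s)) := by
  set α := 1 / b - s
  have hα : 0 < α := sub_pos.2 hsb
  have hderiv (u : ℝ) : ∫ t in (0 : ℝ)..u, s * exp (s * t) = exp (s * u) - 1 := by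
    rw [intervalIntegral.integral_eq_sub_of_hasDerivAt (f := fun t => exp (s * t))
      (fun t _ => by simpa [mul_comm] using ((hasDerivAt_id t).const_mul s).exp)
      ((by fun_prop : Continuous fun t => s * exp (s * t)).intervalIntegrable _ _),
      mul_zero, exp_zero]
  have hlayer := lintegral_comp_eq_lintegral_meas_lt_mul μ (ae_of_all _ hf0) hf.aemeasurable
    (fun t _ => (by fun_prop : Continuous fun t => s * exp (s * t)).intervalIntegrable 0 t)
    (ae_of_all _ fun t => by positivity)
  simp only [hderiv] at hlayer
  have hint : IntegrableOn (fun t => C * s * exp (-α * t)) (Ioi 0) :=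
    (integrableOn_exp_mul_Ioi (neg_lt_zero.2 hα) 0).const_mul _
  calc ∫⁻ ω, ENNReal.ofReal (exp (s * f ω) - 1) ∂μ
      = ∫⁻ t in Ioi 0, μ {ω | t < f ω} * ENNReal.ofReal (s * exp (s * t)) := hlayer
    _ ≤ ∫⁻ t in Ioi 0, ENNReal.ofReal (C * s * exp (-α * t)) := by
      refine setLIntegral_mono (by fun_prop) fun t ht => ?_
      calc μ {ω | t < f ω} * ENNReal.ofReal (s * exp (s * t))
          ≤ ENNReal.ofReal (C * exp (-t / b)) * ENNReal.ofReal (s * exp (s * t)) := by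
            gcongr; exact htail t ht
        _ = ENNReal.ofReal (C * s * exp (-α * t)) := by
            rw [← ENNReal.ofReal_mul (by positivity), mul_mul_mul_comm, ← exp_add]
            congr 3; ring
    _ = ENNReal.ofReal (C * s / α) := by
      rw [← ofReal_integral_eq_lintegral_ofReal hint (ae_of_all _ fun t => by positivity),
        integral_const_mul, integral_exp_mul_Ioi (neg_lt_zero.2 hα)]
      simp only [mul_zero, exp_zero, neg_div_neg_eq, mul_one_div]

theorem integrable_exp_mul_and_integral_le_of_tail [IsProbabilityMeasure μ] {f : Ω → ℝ}
    (hf : Measurable f) (hf0 : ∀ ω, 0 ≤ f ω) {C b s : ℝ} (hC : 0 ≤ C) (hb : 0 < b)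
    (hs : 0 ≤ s) (hsb : s ≤ 1 / (2 * b))
    (htail : ∀ t > 0, μ {ω | t < f ω} ≤ ENNReal.ofReal (C * exp (-t / b))) :
    Integrable (fun ω => exp (s * f ω)) μ ∧ ∫ ω, exp (s * f ω) ∂μ ≤ exp (2 * C * b * s) := by
  have hbs : 2 * b * s ≤ 1 := by rwa [le_div_iff₀' (by positivity)] at hsb
  have hsb' : s < 1 / b := by
    rw [lt_div_iff₀' hb]; linarith
  have hbound : C * s / (1 / b - s) ≤ 2 * C * b * s := by
    have hsplit : 2 * C * b * s * (1 / b - s) = C * s + C * s * (1 - 2 * b * s) := by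
      field_simp; ring
    rw [div_le_iff₀ (sub_pos.2 hsb'), hsplit]
    exact le_add_of_nonneg_right (mul_nonneg (mul_nonneg hC hs) (sub_nonneg.2 hbs))
  have hlin := (lintegral_exp_mul_sub_one_le_of_tail hf hf0 hC hs hsb' htail).trans
    (ENNReal.ofReal_le_ofReal hbound)
  have hg0 : 0 ≤ᵐ[μ] fun ω => exp (s * f ω) - 1 :=
    ae_of_all _ fun ω => sub_nonneg.2 (one_le_exp (mul_nonneg hs (hf0 ω)))
  have hgm : AEStronglyMeasurable (fun ω => exp (s * f ω) - 1) μ := by fun_prop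
  have hg : Integrable (fun ω => exp (s * f ω) - 1) μ :=
    (lintegral_ofReal_ne_top_iff_integrable hgm hg0).1
      (ne_top_of_le_ne_top ENNReal.ofReal_ne_top hlin)
  have hint : Integrable (fun ω => exp (s * f ω)) μ := by
    simpa only [sub_eq_add_neg, integrable_add_const_iff] using hg
  refine ⟨hint, ?_⟩
  have hgint : ∫ ω, exp (s * f ω) - 1 ∂μ ≤ 2 * C * b * s := by
    rw [integral_eq_lintegral_of_nonneg_ae hg0 hgm]
    exact ENNReal.toReal_le_of_le_ofReal (by positivity) hlin
  rw [integral_sub hint (integrable_const 1)] at hgint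
  simp only [integral_const, probReal_univ, smul_eq_mul, mul_one] at hgint
  linarith [add_one_le_exp (2 * C * b * s)]

theorem measure_le_sum_le_exp_of_mgf_le {ι : Type*} {X : ι → Ω → ℝ} (hindep : iIndepFun X μ)
    (hmeas : ∀ i, Measurable (X i)) (s : Finset ι)
    {t : ℝ} (ht : 0 ≤ t) {c : ι → ℝ}
    (hint : ∀ i ∈ s, Integrable (fun ω => exp (t * X i ω)) μ)
    (hmgf : ∀ i ∈ s, mgf (X i) μ t ≤ exp (c i)) (m : ℝ) :
    μ {ω | m ≤ ∑ i ∈ s, X i ω} ≤ ENNReal.ofReal (exp (-t * m + ∑ i ∈ s, c i)) := by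
  have := hindep.isProbabilityMeasure
  have hchernoff := measure_ge_le_exp_mul_mgf m ht (hindep.integrable_exp_mul_sum hmeas hint)
  rw [hindep.mgf_sum hmeas] at hchernoff
  simp only [Finset.sum_apply] at hchernoff
  rw [← ofReal_measureReal]
  refine ENNReal.ofReal_le_ofReal (hchernoff.trans ?_)
  rw [exp_add, exp_sum]
  gcongr with i hi
  · exact fun i _ => mgf_nonneg
  · exact hmgf i hi

theorem measure_lt_tsum_le_of_forall_sum_range {X : ℕ → Ω → ℝ} (hX : ∀ i ω, 0 ≤ X i ω)
    {m : ℝ} {B : ENNReal}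
    (h : ∀ n, μ {ω | m < ∑ i ∈ range n, X i ω} ≤ B) :
    μ {ω | m < ∑' i, X i ω} ≤ B := by
  have hmono : Monotone fun n => {ω | m < ∑ i ∈ range n, X i ω} := fun n n' hn ω hω =>
    hω.trans_le (sum_le_sum_of_subset_of_nonneg (range_subset_range.2 hn) fun i _ _ => hX i ω)
  have hsub : {ω | m < ∑' i, X i ω} ⊆ ⋃ n, {ω | m < ∑ i ∈ range n, X i ω} := by
    intro ω hω
    by_cases hsum : Summable fun i => X i ω
    · exact mem_iUnion.2 (hsum.hasSum.tendsto_sum_nat.eventually (lt_mem_nhds hω)).exists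
    · have hdiv := (not_summable_iff_tendsto_nat_atTop_of_nonneg (hX · ω)).1 hsum
      exact mem_iUnion.2 (hdiv.eventually_gt_atTop m).exists
  calc μ {ω | m < ∑' i, X i ω} ≤ μ (⋃ n, {ω | m < ∑ i ∈ range n, X i ω}) := measure_mono hsub
    _ = ⨆ n, μ {ω | m < ∑ i ∈ range n, X i ω} := hmono.measure_iUnion
    _ ≤ B := iSup_le h

theorem measure_lt_tsum_abs_mul_le_of_tail {x : ℕ → Ω → ℝ} (hmeas : ∀ i, Measurable (x i))
    (hindep : iIndepFun x μ) {C b : ℝ}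
    (hC : 0 ≤ C) (hb : 0 < b)
    (htail : ∀ i, ∀ t > 0, μ {ω | t < |x i ω|} ≤ ENNReal.ofReal (C * exp (-t / b)))
    {a : ℕ → ℝ} (ha : Summable fun i => |a i|) {t : ℝ} (ht : 0 ≤ t)
    (hta : ∀ i, t * |a i| ≤ 1 / (2 * b)) (m : ℝ) :
    μ {ω | m < ∑' i, |a i * x i ω|}
      ≤ ENNReal.ofReal (exp (-t * m + 2 * C * b * t * ∑' i, |a i|)) := by
  have := hindep.isProbabilityMeasure
  have hmgf (i : ℕ) : Integrable (fun ω => exp (t * |a i * x i ω|)) μ ∧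
      mgf (fun ω => |a i * x i ω|) μ t ≤ exp (2 * C * b * (t * |a i|)) := by
    simpa only [mgf, abs_mul, ← mul_assoc] using integrable_exp_mul_and_integral_le_of_tail
      (hmeas i).abs (fun ω => abs_nonneg _) hC hb (by positivity) (hta i) (htail i)
  refine measure_lt_tsum_le_of_forall_sum_range (fun i ω => abs_nonneg _) fun n => ?_
  refine (measure_mono fun ω (hω : m < _) => hω.le).trans
    ((measure_le_sum_le_exp_of_mgf_le (hindep.comp (fun i y => |a i * y|) (by fun_prop))
      (fun i => by fun_prop) (range n) ht (fun i _ => (hmgf i).1) (fun i _ => (hmgf i).2)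
      m).trans ?_)
  gcongr
  simp only [← mul_assoc, ← mul_sum]
  gcongr
  exact ha.sum_le_tsum _ fun i _ => abs_nonneg _

end

theorem statement_12_general
    (Ω : Type) [MeasurableSpace Ω] (μ : Measure Ω) [IsProbabilityMeasure μ]
    (x : ℕ → Ω → ℝ)
    (hmeas : ∀ i, Measurable (x i))
    (hindep : iIndepFun x μ)
    (Cx bx : ℝ) (hbx : 0 < bx)
    (htail : ∀ i (m : ℝ), 0 < m →
      μ {ω | m < |x i ω|} ≤ ENNReal.ofReal (Cx * Real.exp (-m / bx))) :
    ∃ Kx : ℝ, 0 < Kx ∧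
      ∀ a : ℕ → ℝ, Summable (fun i => |a i|) →
        ∀ m : ℝ, 0 < m →
          μ {ω | m < ∑' i : ℕ, |a i * x i ω|}
            ≤ ENNReal.ofReal (Real.exp (-(1 / (⨆ i, |a i|))
                * (m / (2 * Kx * Real.exp 1) - ∑' i : ℕ, |a i|))) := by
  set C := max 1 Cx
  have hC : 0 < C := by positivity
  have htailC (i : ℕ) : ∀ t > 0, μ {ω | t < |x i ω|} ≤ ENNReal.ofReal (C * exp (-t / bx)) :=
    fun t ht => (htail i t ht).trans (by gcongr; exact le_max_right _ _)
  set K := 2 * bx * C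
  have hK : 0 < K := by positivity
  refine ⟨K, hK, fun a ha m hm => ?_⟩
  set S := ⨆ i, |a i|
  obtain hS | hS : 0 = S ∨ 0 < S := (Real.iSup_nonneg fun i => abs_nonneg (a i)).eq_or_lt
  · -- `1 / 0 = 0`: for `a = 0` the bound is `exp 0 = 1`.
    rw [← hS, div_zero, neg_zero, zero_mul, exp_zero, ENNReal.ofReal_one]
    exact prob_le_one
  have haS (i : ℕ) : |a i| ≤ S :=
    le_ciSup ⟨_, forall_mem_range.2 fun j => ha.le_tsum j fun k _ => abs_nonneg _⟩ i
  have hta (i : ℕ) : 1 / (S * K) * |a i| ≤ 1 / (2 * bx) := by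
    calc 1 / (S * K) * |a i| ≤ 1 / (S * K) * S := by gcongr; exact haS i
      _ = 1 / K := by field_simp
      _ ≤ 1 / (2 * bx) := one_div_le_one_div_of_le (by positivity)
        (le_mul_of_one_le_right (by positivity) (le_max_left 1 Cx))
  refine (measure_lt_tsum_abs_mul_le_of_tail hmeas hindep hC.le hbx htailC ha (by positivity)
    hta m).trans (ENNReal.ofReal_le_ofReal (exp_le_exp.2 ?_))
  have h2e : K ≤ 2 * K * exp 1 := by nlinarith [add_one_le_exp 1]
  calc -(1 / (S * K)) * m + 2 * C * bx * (1 / (S * K)) * ∑' i, |a i|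
      = -(1 / S) * (m / K - ∑' i, |a i|) := by simp only [K]; field_simp; ring
    _ ≤ -(1 / S) * (m / (2 * K * exp 1) - ∑' i, |a i|) :=
        mul_le_mul_of_nonpos_left (sub_le_sub_right (div_le_div_of_nonneg_left hm.le
          (by positivity) h2e) _) (by rw [neg_nonpos]; positivity)

theorem statement_12
    (Ω : Type) [MeasurableSpace Ω] (μ : Measure Ω) [IsProbabilityMeasure μ]
    (x : ℕ → Ω → ℝ)
    (hmeas : ∀ i, Measurable (x i))
    (hint : ∀ i, Integrable (x i) μ)
    (hindep : iIndepFun x μ)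
    (hmean : ∀ i, (∫ ω, x i ω ∂μ) = 0)
    (Cx bx : ℝ) (hCx : 0 < Cx) (hbx : 0 < bx)
    (htail : ∀ i (m : ℝ), 0 < m →
      μ {ω | m < |x i ω|} ≤ ENNReal.ofReal (Cx * Real.exp (-m / bx))) :
    ∃ Kx : ℝ, 0 < Kx ∧
      ∀ a : ℕ → ℝ, Summable (fun i => |a i|) →
        ∀ m : ℝ, 0 < m →
          μ {ω | m < ∑' i : ℕ, |a i * x i ω|}
            ≤ ENNReal.ofReal (Real.exp (-(1 / (⨆ i, |a i|))
                * (m / (2 * Kx * Real.exp 1) - ∑' i : ℕ, |a i|))) :=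
  statement_12_general Ω μ x hmeas hindep Cx bx hbx htail
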